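/- arXiv:2408.13649 — 2 statements merged into one kernel-verified Lean document; each statement's English description precedes it below -/
import Mathlib

section
/- The choice of the root has no stochastic incidence: if N is the vector obtained from the MPMRF construction on T with root r, and N′ is the vector obtained from the same construction on the same tree T with the same λ and the same dependence parameters α but with a different root r′ ∈ V, then N and N′ have the same joint distribution on ℕ^V. -/
open MeasureTheory ProbabilityTheory
open scoped ProbabilityTheory

/-- The Poisson probability mass function with mean `lam`, evaluated at `k`. -/
noncomputable def poissonProb (lam : ℝ) (k : ℕ) : ℝ :=
  Real.exp (-lam) * lam ^ k / (Nat.factorial k)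

/-- The MPMRF construction: a tree-structured Markov random field with Poisson(`lam`)
marginals, built on a tree `G` rooted at `root` via the stochastic representation
`N_root = L_root` and `N_v = α_{(pa v, v)} ∘ N_{pa v} + L_v` for `v ≠ root`, where `∘`
denotes binomial thinning (realized through the i.i.d. Bernoulli indicators `I v i`),
the innovations `L_v` are Poisson, and all innovations and indicator sequences are
mutually independent. -/
structure MPMRF {V : Type} [Fintype V] [DecidableEq V]
    (G : SimpleGraph V) (lam : ℝ) (alpha : Sym2 V → ℝ)
    (Ω : Type) [MeasureSpace Ω] : Type where
  /-- the underlying graph is a tree -/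
  isTree : G.IsTree
  lam_pos : 0 < lam
  alpha_mem : ∀ e ∈ G.edgeSet, alpha e ∈ Set.Icc (0 : ℝ) 1
  /-- the chosen root -/
  root : V
  /-- the parent function of the rooted tree -/
  pa : V → V
  pa_adj : ∀ v, v ≠ root → G.Adj (pa v) v
  pa_dist : ∀ v, v ≠ root → G.dist root (pa v) + 1 = G.dist root v
  /-- innovation random variables -/
  L : V → Ω → ℕ
  /-- Bernoulli indicators used in the binomial thinnings -/
  I : V → ℕ → Ω → ℕ
  /-- the components of the Markov random field -/
  N : V → Ω → ℕ
  meas_L : ∀ v, Measurable (L v)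
  meas_I : ∀ v i, Measurable (I v i)
  meas_N : ∀ v, Measurable (N v)
  I_le_one : ∀ v i ω, I v i ω ≤ 1
  I_bern : ∀ v, v ≠ root → ∀ i,
    ℙ {ω | I v i ω = 1} = ENNReal.ofReal (alpha s(pa v, v))
  L_root_poisson : ∀ k, ℙ {ω | L root ω = k} = ENNReal.ofReal (poissonProb lam k)
  L_poisson : ∀ v, v ≠ root → ∀ k,
    ℙ {ω | L v ω = k} =
      ENNReal.ofReal (poissonProb (lam * (1 - alpha s(pa v, v))) k)
  /-- the innovations and all indicator variables are mutually independent -/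
  indep : iIndepFun
    (Sum.elim L (fun p : V × ℕ => I p.1 p.2)) ℙ
  N_root : N root = L root
  N_rec : ∀ v, v ≠ root → ∀ ω,
    N v ω = (∑ i ∈ Finset.range (N (pa v) ω), I v i ω) + L v ω

/-!
Unwinding the recursion from the root, with the innovations and thinning indicators of distinct
vertices independent, gives `P(N = f) = p(f r) ∏_{v ≠ r} K(f (pa v), f v)`, where `p` is the
Poisson(`λ`) mass function and `K(m, ·)` is the law of `α ∘ m + Poisson(λ (1 - α))`.
The thinning step is reversible for `p`: `p(m) K(m, k) = p(k) K(k, m)`. Multiplying by the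
positive, root-free product `∏_{uv ∈ E} p(f u) p(f v)` therefore turns `P(N = f)` into
`∏_v p(f v) ∏_{uv ∈ E} p(f u) K(f u, f v)`, in which the root no longer appears.
-/

open Finset

namespace SimpleGraph

variable {V : Type*} [Fintype V] [DecidableEq V] {G : SimpleGraph V} [Fintype G.edgeSet]

/-- Injectivity of `v ↦ s(pa v, v)` comes from `pa` decreasing `d`; surjectivity is then a
count, a tree on `n` vertices having `n - 1` edges. -/
lemma IsTree.prod_edgeFinset_eq_prod_parent {M : Type*} [CommMonoid M] (hG : G.IsTree)
    {r : V} {pa : V → V} {d : V → ℕ} (hadj : ∀ v, v ≠ r → G.Adj (pa v) v)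
    (hd : ∀ v, v ≠ r → d (pa v) < d v) (g : Sym2 V → M) :
    ∏ e ∈ G.edgeFinset, g e = ∏ v ∈ univ.erase r, g s(pa v, v) := by
  have hinj : Set.InjOn (fun v => s(pa v, v)) (univ.erase r : Finset V) := by
    intro v hv w hw hvw
    rcases Sym2.eq_iff.mp hvw with ⟨-, h⟩ | ⟨hvw, hwv⟩
    · exact h
    · have hv' := hd v (ne_of_mem_erase hv)
      have hw' := hd w (ne_of_mem_erase hw)
      rw [hvw] at hv'
      rw [← hwv] at hw'
      exact absurd hv' hw'.not_gt
  have himage : (univ.erase r).image (fun v => s(pa v, v)) = G.edgeFinset := by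
    refine eq_of_subset_of_card_le (fun e he => ?_) ?_
    · obtain ⟨v, hv, rfl⟩ := mem_image.mp he
      exact mem_edgeFinset.mpr (hadj v (ne_of_mem_erase hv))
    · rw [card_image_of_injOn hinj, card_erase_of_mem (mem_univ r), card_univ,
        ← hG.card_edgeFinset, Nat.add_sub_cancel]
  rw [← himage, prod_image hinj]

end SimpleGraph

lemma poissonProb_pos {lam : ℝ} (h : 0 < lam) (k : ℕ) : 0 < poissonProb lam k := by
  unfold poissonProb
  positivity

lemma poissonProb_nonneg {lam : ℝ} (h : 0 ≤ lam) (k : ℕ) : 0 ≤ poissonProb lam k := by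
  unfold poissonProb
  positivity

noncomputable def binomialProb (a : ℝ) (m j : ℕ) : ℝ :=
  m.choose j * a ^ j * (1 - a) ^ (m - j)

lemma binomialProb_nonneg {a : ℝ} (ha : a ∈ Set.Icc 0 1) (m j : ℕ) :
    0 ≤ binomialProb a m j := by
  have h0 := ha.1
  have h1 : 0 ≤ 1 - a := sub_nonneg.mpr ha.2
  unfold binomialProb
  positivity

lemma binomialProb_zero_left (a : ℝ) (j : ℕ) : binomialProb a 0 j = if j = 0 then 1 else 0 := by
  cases j <;> simp [binomialProb]

lemma binomialProb_one_of_two_le (a : ℝ) {n : ℕ} (hn : 2 ≤ n) : binomialProb a 1 n = 0 := by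
  simp [binomialProb, Nat.choose_eq_zero_of_lt (by omega : 1 < n)]

lemma binomialProb_succ_succ (a : ℝ) (m j : ℕ) :
    binomialProb a (m + 1) (j + 1) =
      binomialProb a m j * a + binomialProb a m (j + 1) * (1 - a) := by
  unfold binomialProb
  rw [Nat.choose_succ_succ, Nat.succ_sub_succ]
  push_cast
  rcases lt_trichotomy j m with h | rfl | h
  · rw [show m - j = m - (j + 1) + 1 by omega, pow_succ]
    ring
  · simp [pow_succ]
  · simp [Nat.choose_eq_zero_of_lt h, Nat.choose_eq_zero_of_lt (by omega : m < j + 1)]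

lemma sum_binomialProb_mul_binomialProb_one (a : ℝ) (m j : ℕ) :
    ∑ i ∈ range (j + 1), binomialProb a m i * binomialProb a 1 (j - i) =
      binomialProb a (m + 1) j := by
  cases j with
  | zero => simp [binomialProb]; ring
  | succ j =>
    rw [sum_range_succ, sum_range_succ, sum_eq_zero fun i hi => by
      rw [binomialProb_one_of_two_le a (by simp at hi; omega), mul_zero]]
    rw [Nat.add_sub_cancel_left, Nat.sub_self, binomialProb_succ_succ a m j]
    simp [binomialProb]

/-- The law at `k` of `a ∘ m + Poisson(lam (1 - a))`, one step of the MPMRF recursion. -/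
noncomputable def thinningKernel (lam a : ℝ) (m k : ℕ) : ℝ :=
  ∑ j ∈ range (k + 1), binomialProb a m j * poissonProb (lam * (1 - a)) (k - j)

lemma thinningKernel_nonneg {lam a : ℝ} (hlam : 0 ≤ lam) (ha : a ∈ Set.Icc 0 1) (m k : ℕ) :
    0 ≤ thinningKernel lam a m k :=
  sum_nonneg fun j _ => mul_nonneg (binomialProb_nonneg ha m j)
    (poissonProb_nonneg (mul_nonneg hlam (sub_nonneg.mpr ha.2)) _)

lemma poissonProb_mul_thinningKernel (lam a : ℝ) (m k : ℕ) :
    poissonProb lam m * thinningKernel lam a m k =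
      ∑ j ∈ range (min m k + 1), Real.exp (-lam) * Real.exp (-(lam * (1 - a))) *
        (lam * a) ^ j * (lam * (1 - a)) ^ (m - j + (k - j)) /
          (j.factorial * (m - j).factorial * (k - j).factorial) := by
  unfold thinningKernel
  rw [mul_sum, ← sum_subset (range_subset_range.mpr (by omega : min m k + 1 ≤ k + 1))]
  · refine sum_congr rfl fun j hj => ?_
    have hjm : j ≤ m := by simp at hj; omega
    unfold poissonProb binomialProb
    rw [Nat.cast_choose ℝ hjm, show lam ^ m = lam ^ j * lam ^ (m - j) by
      rw [← pow_add, Nat.add_sub_cancel' hjm], pow_add, mul_pow, mul_pow, mul_pow]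
    field_simp
  · intro j hk hj
    simp only [mem_range] at hk hj
    simp [binomialProb, Nat.choose_eq_zero_of_lt (by omega : m < j)]

lemma poissonProb_mul_thinningKernel_comm (lam a : ℝ) (m k : ℕ) :
    poissonProb lam m * thinningKernel lam a m k =
      poissonProb lam k * thinningKernel lam a k m := by
  rw [poissonProb_mul_thinningKernel, poissonProb_mul_thinningKernel, min_comm]
  refine sum_congr rfl fun j _ => ?_
  rw [add_comm (m - j)]
  ring

lemma Measurable.sum_range_apply {Ω A : Type*} {mΩ : MeasurableSpace Ω} [AddCommMonoid A]
    [MeasurableSpace A] [MeasurableAdd₂ A] {g : Ω → ℕ} {B : ℕ → Ω → A}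
    (hg : Measurable g) (hB : ∀ i, Measurable (B i)) :
    Measurable fun ω => ∑ i ∈ range (g ω), B i ω := by
  have : Measurable fun p : Ω × ℕ => ∑ i ∈ range p.2, B i p.1 :=
    measurable_from_prod_countable_left fun n =>
      Finset.measurable_sum (range n) fun i _ => hB i
  exact this.comp (measurable_id.prodMk hg)

namespace ProbabilityTheory

open MeasureTheory

variable {Ω ι κ : Type*} {mΩ : MeasurableSpace Ω} {μ : Measure Ω}

abbrev blockSigma [MeasurableSpace κ] (X : ι → Ω → κ) (s : Set ι) : MeasurableSpace Ω :=
  ⨆ i ∈ s, MeasurableSpace.comap (X i) inferInstance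

lemma measurable_blockSigma [MeasurableSpace κ] {X : ι → Ω → κ} {s : Set ι} {i : ι}
    (hi : i ∈ s) : Measurable[blockSigma X s] (X i) :=
  (measurable_iff_comap_le.mpr le_rfl).mono
    (le_biSup (fun i => MeasurableSpace.comap (X i) inferInstance) hi) le_rfl

lemma iIndepFun.indep_blockSigma [MeasurableSpace κ] {X : ι → Ω → κ}
    (hX : ∀ i, Measurable (X i)) (h : iIndepFun X μ) {s t : Set ι} (hst : Disjoint s t) :
    Indep (blockSigma X s) (blockSigma X t) μ :=
  indep_iSup_of_disjoint (fun i => (hX i).comap_le) h.iIndep hst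

lemma iIndepFun.indepFun_of_measurable_blockSigma [MeasurableSpace κ] {β γ : Type*}
    [MeasurableSpace β] [MeasurableSpace γ] {X : ι → Ω → κ} (hX : ∀ i, Measurable (X i))
    (h : iIndepFun X μ) {s t : Set ι} (hst : Disjoint s t) {U : Ω → β} {W : Ω → γ}
    (hU : Measurable[blockSigma X s] U) (hW : Measurable[blockSigma X t] W) : U ⟂ᵢ[μ] W :=
  (IndepFun_iff_Indep U W μ).mpr <| indep_of_indep_of_le_left
    (indep_of_indep_of_le_right (h.indep_blockSigma hX hst) hW.comap_le) hU.comap_le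

lemma IndepFun.measure_add_eq_sum {U W : Ω → ℕ} (hU : Measurable U) (hW : Measurable W)
    (h : U ⟂ᵢ[μ] W) (k : ℕ) :
    μ {ω | U ω + W ω = k} =
      ∑ j ∈ range (k + 1), μ {ω | U ω = j} * μ {ω | W ω = k - j} := by
  have hsplit :
      {ω | U ω + W ω = k} = ⋃ j ∈ range (k + 1), U ⁻¹' {j} ∩ W ⁻¹' {k - j} := by
    ext ω
    simp only [Set.mem_ofPred_eq, Set.mem_iUnion, Set.mem_inter_iff, Set.mem_preimage,
      Set.mem_singleton_iff, mem_range, exists_prop]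
    constructor
    · intro hk
      exact ⟨U ω, by omega, rfl, by omega⟩
    · rintro ⟨j, hj, rfl, hW⟩
      omega
  have hdisj : Set.PairwiseDisjoint ↑(range (k + 1))
      fun j => U ⁻¹' {j} ∩ W ⁻¹' {k - j} := fun i _ j _ hij =>
    Set.disjoint_left.mpr fun ω hi hj => hij (hi.1.symm.trans hj.1)
  rw [hsplit, measure_biUnion_finset hdisj fun j _ =>
    (hU (measurableSet_singleton j)).inter (hW (measurableSet_singleton (k - j)))]
  exact sum_congr rfl fun j _ =>
    h.measure_inter_preimage_eq_mul _ _ (measurableSet_singleton _) (measurableSet_singleton _)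

lemma measure_eq_binomialProb_one [IsProbabilityMeasure μ] {B : Ω → ℕ} (hB : Measurable B)
    (hle : ∀ ω, B ω ≤ 1) {a : ℝ} (ha : a ∈ Set.Icc 0 1)
    (h1 : μ {ω | B ω = 1} = ENNReal.ofReal a) (n : ℕ) :
    μ {ω | B ω = n} = ENNReal.ofReal (binomialProb a 1 n) := by
  match n with
  | 0 =>
    have hcompl : {ω | B ω = 0} = {ω | B ω = 1}ᶜ := by
      ext ω
      have := hle ω
      simp only [Set.mem_ofPred_eq, Set.mem_compl_iff]
      omega
    have hmeas : MeasurableSet {ω | B ω = 1} := hB (measurableSet_singleton 1)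
    rw [hcompl, prob_compl_eq_one_sub hmeas, h1,
      ← ENNReal.ofReal_one, ← ENNReal.ofReal_sub 1 ha.1]
    simp [binomialProb]
  | 1 => simpa [binomialProb] using h1
  | n + 2 =>
    have hempty : {ω | B ω = n + 2} = ∅ :=
      Set.eq_empty_of_forall_notMem fun ω hω => by have := hle ω; simp_all
    rw [hempty, binomialProb_one_of_two_le a (by omega)]
    simp

lemma iIndepFun.measure_sum_range_eq_binomialProb [IsProbabilityMeasure μ] {B : ℕ → Ω → ℕ}
    (h : iIndepFun B μ) (hB : ∀ i, Measurable (B i)) (hle : ∀ i ω, B i ω ≤ 1) {a : ℝ}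
    (ha : a ∈ Set.Icc 0 1) (h1 : ∀ i, μ {ω | B i ω = 1} = ENNReal.ofReal a) (m j : ℕ) :
    μ {ω | ∑ i ∈ range m, B i ω = j} = ENNReal.ofReal (binomialProb a m j) := by
  induction m generalizing j with
  | zero => cases j <;> simp [binomialProb_zero_left]
  | succ m ih =>
    have hsum : Measurable fun ω => ∑ i ∈ range m, B i ω :=
      Finset.measurable_sum _ fun i _ => hB i
    have hindep : (fun ω => ∑ i ∈ range m, B i ω) ⟂ᵢ[μ] B m := by
      simpa [sum_fn] using h.indepFun_finsetSum_of_notMem hB notMem_range_self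
    simp only [sum_range_succ]
    rw [hindep.measure_add_eq_sum hsum (hB m), ← sum_binomialProb_mul_binomialProb_one,
      ENNReal.ofReal_sum_of_nonneg fun i _ =>
        mul_nonneg (binomialProb_nonneg ha m i) (binomialProb_nonneg ha 1 _)]
    refine sum_congr rfl fun i _ => ?_
    rw [ih, measure_eq_binomialProb_one (hB m) (hle m) ha (h1 m),
      ENNReal.ofReal_mul (binomialProb_nonneg ha m i)]

end ProbabilityTheory

section RootedLaw

variable {V : Type*}

noncomputable def edgePoissonWeight (lam : ℝ) (f : V → ℕ) : Sym2 V → ℝ :=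
  Sym2.lift ⟨fun u v => poissonProb lam (f u) * poissonProb lam (f v), fun _ _ => mul_comm _ _⟩

noncomputable def edgeJointWeight (lam : ℝ) (alpha : Sym2 V → ℝ) (f : V → ℕ) :
    Sym2 V → ℝ :=
  Sym2.lift ⟨fun u v => poissonProb lam (f u) * thinningKernel lam (alpha s(u, v)) (f u) (f v),
    fun u v => by
      dsimp only
      rw [Sym2.eq_swap]
      exact poissonProb_mul_thinningKernel_comm _ _ _ _⟩

lemma edgePoissonWeight_pos {lam : ℝ} (hlam : 0 < lam) (f : V → ℕ) (e : Sym2 V) :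
    0 < edgePoissonWeight lam f e :=
  e.ind fun _ _ => mul_pos (poissonProb_pos hlam _) (poissonProb_pos hlam _)

variable [Fintype V] [DecidableEq V]

/-- The law `P(N = f)` of the MPMRF rooted at `r`. -/
noncomputable def rootedLaw (lam : ℝ) (alpha : Sym2 V → ℝ) (r : V) (pa : V → V)
    (f : V → ℕ) : ℝ :=
  poissonProb lam (f r) *
    ∏ v ∈ univ.erase r, thinningKernel lam (alpha s(pa v, v)) (f (pa v)) (f v)

variable {G : SimpleGraph V} [Fintype G.edgeSet]

lemma SimpleGraph.IsTree.rootedLaw_mul_prod_edgePoissonWeight (hG : G.IsTree) {r : V}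
    {pa : V → V} {d : V → ℕ} (hadj : ∀ v, v ≠ r → G.Adj (pa v) v)
    (hd : ∀ v, v ≠ r → d (pa v) < d v) (lam : ℝ) (alpha : Sym2 V → ℝ) (f : V → ℕ) :
    rootedLaw lam alpha r pa f * ∏ e ∈ G.edgeFinset, edgePoissonWeight lam f e =
      (∏ v, poissonProb lam (f v)) * ∏ e ∈ G.edgeFinset, edgeJointWeight lam alpha f e := by
  rw [hG.prod_edgeFinset_eq_prod_parent hadj hd, hG.prod_edgeFinset_eq_prod_parent hadj hd,
    rootedLaw, ← mul_prod_erase univ _ (mem_univ r)]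
  simp only [edgePoissonWeight, edgeJointWeight, Sym2.lift_mk, prod_mul_distrib]
  ring

lemma SimpleGraph.IsTree.rootedLaw_eq (hG : G.IsTree) {lam : ℝ} (hlam : 0 < lam)
    (alpha : Sym2 V → ℝ) {r r' : V} {pa pa' : V → V} {d d' : V → ℕ}
    (hadj : ∀ v, v ≠ r → G.Adj (pa v) v) (hd : ∀ v, v ≠ r → d (pa v) < d v)
    (hadj' : ∀ v, v ≠ r' → G.Adj (pa' v) v) (hd' : ∀ v, v ≠ r' → d' (pa' v) < d' v)
    (f : V → ℕ) : rootedLaw lam alpha r pa f = rootedLaw lam alpha r' pa' f :=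
  mul_right_cancel₀ (prod_pos fun e _ => edgePoissonWeight_pos hlam f e).ne'
    ((hG.rootedLaw_mul_prod_edgePoissonWeight hadj hd lam alpha f).trans
      (hG.rootedLaw_mul_prod_edgePoissonWeight hadj' hd' lam alpha f).symm)

end RootedLaw

namespace MPMRF

open MeasureTheory ProbabilityTheory

def vertexBlock {V : Type} (T : Set V) : Set (V ⊕ V × ℕ) :=
  Sum.inl '' T ∪ Sum.inr '' (Prod.fst ⁻¹' T)

lemma vertexBlock_disjoint {V : Type} {T T' : Set V} (h : Disjoint T T') :
    Disjoint (vertexBlock T) (vertexBlock T') := by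
  rw [Set.disjoint_left]
  rintro _ (⟨u, hu, rfl⟩ | ⟨p, hp, rfl⟩) (⟨u', hu', hu'u⟩ | ⟨p', hp', hp'p⟩)
  · exact Set.disjoint_left.mp h hu (Sum.inl_injective hu'u ▸ hu')
  · exact Sum.inr_ne_inl hp'p
  · exact Sum.inl_ne_inr hu'u
  · exact Set.disjoint_left.mp h hp (Sum.inr_injective hp'p ▸ hp')

variable {V : Type} [Fintype V] [DecidableEq V] {G : SimpleGraph V} {lam : ℝ}
  {alpha : Sym2 V → ℝ} {Ω : Type} [MeasureSpace Ω] (M : MPMRF G lam alpha Ω)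

def noise : V ⊕ V × ℕ → Ω → ℕ := Sum.elim M.L fun p => M.I p.1 p.2

lemma measurable_noise (j : V ⊕ V × ℕ) : Measurable (M.noise j) := by
  rcases j with v | ⟨v, i⟩
  exacts [M.meas_L v, M.meas_I v i]

lemma iIndepFun_noise : iIndepFun M.noise ℙ := M.indep

lemma measurable_L_blockSigma {T : Set V} {v : V} (hv : v ∈ T) :
    Measurable[blockSigma M.noise (vertexBlock T)] (M.L v) :=
  measurable_blockSigma (X := M.noise) (i := Sum.inl v) (Or.inl ⟨v, hv, rfl⟩)

lemma measurable_I_blockSigma {T : Set V} {v : V} (hv : v ∈ T) (i : ℕ) :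
    Measurable[blockSigma M.noise (vertexBlock T)] (M.I v i) :=
  measurable_blockSigma (X := M.noise) (i := Sum.inr (v, i)) (Or.inr ⟨(v, i), hv, rfl⟩)

lemma dist_pa_lt {v : V} (hv : v ≠ M.root) : G.dist M.root (M.pa v) < G.dist M.root v := by
  have := M.pa_dist v hv
  omega

lemma alpha_mem_Icc {v : V} (hv : v ≠ M.root) : alpha s(M.pa v, v) ∈ Set.Icc 0 1 :=
  M.alpha_mem _ (M.pa_adj v hv)

def ParentClosed (T : Set V) : Prop := ∀ u ∈ T, u ≠ M.root → M.pa u ∈ T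

lemma measurable_N_blockSigma {T : Set V} (hT : M.ParentClosed T) {v : V} (hv : v ∈ T) :
    Measurable[blockSigma M.noise (vertexBlock T)] (M.N v) := by
  induction hd : G.dist M.root v using Nat.strong_induction_on generalizing v with
  | _ n ih =>
    by_cases hvr : v = M.root
    · subst hvr
      rw [M.N_root]
      exact M.measurable_L_blockSigma hv
    · rw [funext (M.N_rec v hvr)]
      exact (Measurable.sum_range_apply (ih _ (hd ▸ M.dist_pa_lt hvr) (hT v hv hvr) rfl)
        (M.measurable_I_blockSigma hv)).add (M.measurable_L_blockSigma hv)

lemma exists_erase_parentClosed {S : Finset V} (hS : M.ParentClosed ↑S)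
    (hne : (S.erase M.root).Nonempty) :
    ∃ w ∈ S, w ≠ M.root ∧ M.pa w ∈ S.erase w ∧ M.ParentClosed ↑(S.erase w) := by
  -- a vertex of `S` farthest from the root is the parent of no vertex of `S`
  obtain ⟨w, hw, hmax⟩ := exists_max_image (S.erase M.root) (G.dist M.root) hne
  have hwS := mem_of_mem_erase hw
  have hwr := ne_of_mem_erase hw
  have hpa : ∀ u ∈ S, u ≠ M.root → M.pa u ∈ S.erase w := fun u hu hur =>
    mem_erase.mpr ⟨fun h =>
      (hmax u (mem_erase.mpr ⟨hur, hu⟩)).not_gt (h ▸ M.dist_pa_lt hur), hS u hu hur⟩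
  exact ⟨w, hwS, hwr, hpa w hwS hwr, fun u hu hur => hpa u (mem_of_mem_erase hu) hur⟩

variable [IsProbabilityMeasure (ℙ : Measure Ω)]

lemma measure_thinning_eq {w : V} (hw : w ≠ M.root) (m k : ℕ) :
    ℙ {ω | ∑ i ∈ range m, M.I w i ω + M.L w ω = k} =
      ENNReal.ofReal (thinningKernel lam (alpha s(M.pa w, w)) m k) := by
  have hdisj : Disjoint (Sum.inr '' (Prod.fst ⁻¹' {w}) : Set (V ⊕ V × ℕ)) {Sum.inl w} := by
    simp
  have hsum : Measurable[blockSigma M.noise (Sum.inr '' (Prod.fst ⁻¹' {w}))]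
      fun ω => ∑ i ∈ range m, M.I w i ω :=
    Finset.measurable_sum _ fun i _ =>
      measurable_blockSigma (X := M.noise) (i := Sum.inr (w, i)) ⟨(w, i), rfl, rfl⟩
  have hL : Measurable[blockSigma M.noise {Sum.inl w}] (M.L w) :=
    measurable_blockSigma (X := M.noise) (i := Sum.inl w) rfl
  have hindep : (fun ω => ∑ i ∈ range m, M.I w i ω) ⟂ᵢ[ℙ] M.L w :=
    M.iIndepFun_noise.indepFun_of_measurable_blockSigma M.measurable_noise hdisj hsum hL
  have hI : iIndepFun (M.I w) ℙ :=
    M.iIndepFun_noise.precomp (g := fun i => Sum.inr (w, i))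
      fun i j h => (Prod.mk.inj (Sum.inr_injective h)).2
  rw [hindep.measure_add_eq_sum (Finset.measurable_sum _ fun i _ => M.meas_I w i) (M.meas_L w),
    thinningKernel, ENNReal.ofReal_sum_of_nonneg fun j _ => mul_nonneg
      (binomialProb_nonneg (M.alpha_mem_Icc hw) m j) (poissonProb_nonneg
        (mul_nonneg M.lam_pos.le (sub_nonneg.mpr (M.alpha_mem_Icc hw).2)) _)]
  refine sum_congr rfl fun j _ => ?_
  rw [hI.measure_sum_range_eq_binomialProb (M.meas_I w) (M.I_le_one w) (M.alpha_mem_Icc hw)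
    (M.I_bern w hw) m j, M.L_poisson w hw,
    ENNReal.ofReal_mul (binomialProb_nonneg (M.alpha_mem_Icc hw) m j)]

lemma measure_iInter_N_eq_mul_thinningKernel (f : V → ℕ) {S : Finset V} {w : V} (hw : w ∈ S)
    (hwr : w ≠ M.root) (hpa : M.pa w ∈ S.erase w) (hS : M.ParentClosed ↑(S.erase w)) :
    ℙ (⋂ v ∈ S, {ω | M.N v ω = f v}) = ℙ (⋂ v ∈ S.erase w, {ω | M.N v ω = f v}) *
      ENNReal.ofReal (thinningKernel lam (alpha s(M.pa w, w)) (f (M.pa w)) (f w)) := by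
  -- once `N (pa w) = f (pa w)`, the event `N w = f w` involves only the variables at `w`
  set thinning := fun ω => ∑ i ∈ range (f (M.pa w)), M.I w i ω + M.L w ω
  have hevent : ⋂ v ∈ S, {ω | M.N v ω = f v} =
      (⋂ v ∈ S.erase w, {ω | M.N v ω = f v}) ∩ thinning ⁻¹' {f w} := by
    ext ω
    simp only [Set.mem_iInter, Set.mem_inter_iff, Set.mem_preimage, Set.mem_singleton_iff,
      Set.mem_ofPred_eq, thinning]
    constructor
    · intro h
      exact ⟨fun v hv => h v (mem_of_mem_erase hv), h (M.pa w) (mem_of_mem_erase hpa) ▸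
        M.N_rec w hwr ω ▸ h w hw⟩
    · rintro ⟨h, hw'⟩ v hv
      rcases eq_or_ne v w with rfl | hvw
      · rw [M.N_rec v hwr ω, h _ hpa, hw']
      · exact h v (mem_erase.mpr ⟨hvw, hv⟩)
  have hA : MeasurableSet[blockSigma M.noise (vertexBlock ↑(S.erase w))]
      (⋂ v ∈ S.erase w, {ω | M.N v ω = f v}) :=
    Finset.measurableSet_biInter _ fun v hv =>
      M.measurable_N_blockSigma hS (mem_coe.mpr hv) (measurableSet_singleton _)
  have hthinning : Measurable[blockSigma M.noise (vertexBlock {w})] thinning :=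
    (Finset.measurable_sum (range (f (M.pa w))) fun i _ =>
      M.measurable_I_blockSigma (Set.mem_singleton w) i).add
        (M.measurable_L_blockSigma (Set.mem_singleton w))
  have hB : MeasurableSet[blockSigma M.noise (vertexBlock {w})] (thinning ⁻¹' {f w}) :=
    hthinning (measurableSet_singleton _)
  have hdisj : Disjoint (vertexBlock ↑(S.erase w)) (vertexBlock {w}) :=
    vertexBlock_disjoint (by simp)
  rw [hevent, (Indep_iff _ _ _).mp
    (M.iIndepFun_noise.indep_blockSigma M.measurable_noise hdisj) _ _ hA hB]
  exact congrArg _ (M.measure_thinning_eq hwr _ _)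

lemma measure_iInter_N_eq (f : V → ℕ) (S : Finset V) (hr : M.root ∈ S)
    (hS : M.ParentClosed ↑S) :
    ℙ (⋂ v ∈ S, {ω | M.N v ω = f v}) = ENNReal.ofReal (poissonProb lam (f M.root) *
      ∏ v ∈ S.erase M.root, thinningKernel lam (alpha s(M.pa v, v)) (f (M.pa v)) (f v)) := by
  induction S using Finset.strongInduction with
  | H S ih =>
    rcases (S.erase M.root).eq_empty_or_nonempty with hS0 | hS0
    · obtain rfl : S = {M.root} := by
        rw [← insert_erase hr, hS0, insert_empty]
      simp [M.N_root, M.L_root_poisson]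
    · obtain ⟨w, hw, hwr, hpa, hSw⟩ := M.exists_erase_parentClosed hS hS0
      have hwS : w ∈ S.erase M.root := mem_erase.mpr ⟨hwr, hw⟩
      rw [M.measure_iInter_N_eq_mul_thinningKernel f hw hwr hpa hSw,
        ih _ (erase_ssubset hw) (mem_erase.mpr ⟨hwr.symm, hr⟩) hSw,
        ← ENNReal.ofReal_mul' (thinningKernel_nonneg M.lam_pos.le (M.alpha_mem_Icc hwr) _ _),
        ← mul_prod_erase _ _ hwS, erase_right_comm, mul_assoc, mul_comm (∏ v ∈ _, _)]

lemma map_N_apply_singleton (f : V → ℕ) :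
    (ℙ : Measure Ω).map (fun ω v => M.N v ω) {f} =
      ENNReal.ofReal (rootedLaw lam alpha M.root M.pa f) := by
  have hevent : (fun ω v => M.N v ω) ⁻¹' {f} = ⋂ v ∈ univ, {ω | M.N v ω = f v} := by
    ext ω
    simp [funext_iff]
  rw [Measure.map_apply (measurable_pi_lambda _ M.meas_N) (measurableSet_singleton f), hevent,
    M.measure_iInter_N_eq f univ (mem_univ _) fun u _ _ => mem_coe.mpr (mem_univ _), rootedLaw]

end MPMRF

theorem mpmrf_root_invariance_general {V : Type} [Fintype V] [DecidableEq V]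
    (G : SimpleGraph V) (lam : ℝ) (alpha : Sym2 V → ℝ)
    (Ω Ω' : Type) [MeasureSpace Ω] [MeasureSpace Ω']
    [IsProbabilityMeasure (ℙ : Measure Ω)] [IsProbabilityMeasure (ℙ : Measure Ω')]
    (M : MPMRF G lam alpha Ω) (M' : MPMRF G lam alpha Ω') :
    Measure.map (fun ω => fun v : V => M.N v ω) (ℙ : Measure Ω)
      = Measure.map (fun ω => fun v : V => M'.N v ω) (ℙ : Measure Ω') := by
  classical
  refine Measure.ext_iff_singleton.mpr fun f => ?_
  rw [M.map_N_apply_singleton, M'.map_N_apply_singleton,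
    M.isTree.rootedLaw_eq M.lam_pos alpha M.pa_adj (fun _ => M.dist_pa_lt) M'.pa_adj
      (fun _ => M'.dist_pa_lt)]

/-- The choice of the root has no stochastic incidence: two MPMRF
constructions on the same tree `G`, with the same `lam` and the same dependence
parameters `alpha`, but rooted at different roots, yield the same joint distribution
on `ℕ^V`. -/
theorem mpmrf_root_invariance {V : Type} [Fintype V] [DecidableEq V]
    (G : SimpleGraph V) (lam : ℝ) (alpha : Sym2 V → ℝ)
    (Ω Ω' : Type) [MeasureSpace Ω] [MeasureSpace Ω']
    [IsProbabilityMeasure (ℙ : Measure Ω)] [IsProbabilityMeasure (ℙ : Measure Ω')]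
    (M : MPMRF G lam alpha Ω) (M' : MPMRF G lam alpha Ω')
    (hroot : M.root ≠ M'.root) :
    Measure.map (fun ω => fun v : V => M.N v ω) (ℙ : Measure Ω)
      = Measure.map (fun ω => fun v : V => M'.N v ω) (ℙ : Measure Ω') :=
  mpmrf_root_invariance_general G lam alpha Ω Ω' M M'
end

section
/- Max-product power of the weighted adjacency matrix of a tree recovers path products: let T = (V, E) be a tree on d vertices with edge weights α_e ∈ [0,1], and let A be the V × V matrix with A_{ii} = 1, A_{ij} = α_{(i,j)} if (i,j) ∈ E, and A_{ij} = 0 otherwise. Define the max-product matrix product by (A ⊛ B)_{ij} = max_{k∈V} A_{ik} B_{kj}, and let A^d denote the d-th power of A with respect to ⊛. Then for all u, v ∈ V, (A^d)_{uv} = ∏_{e ∈ path(u,v)} α_e, the product of the weights along the unique path between u and v (empty product 1 when u = v). Consequently, if N ~ MPMRF(λ, α, T) then Cov(N_u, N_v) = λ (A^d)_{uv}. -/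
/-!
Since the weights lie in `[0, 1]` and `A` has unit diagonal, `(A^n)_{uv}` is the largest weight
product over walks from `u` to `v` of length at most `n`; the path from `u` to `v` has length
`< d`, so `(A^d)_{uv}` is at least the path product `π(u, v)`. Conversely
`π(u, k) α_{kv} ≤ π(u, v)` for every edge `kv`, because in a tree the path to `v` either extends
the path to `k` by `kv` or is a prefix of it; by induction `(A^n)_{uv} ≤ π(u, v)` for all `n`.

For the covariance, given everything outside the innovation and thinning indicators of `v`,
`N_v = α ∘ N_{pa v} + L_v` has mean `α N_{pa v} + λ (1 - α)`. If `v` is not an ancestor of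
`u`, this gives `E[N_u N_v] = α E[N_u N_{pa v}] + λ² (1 - α)`, and the path from `u` to `v`
enters `v` through `pa v`, so `π(u, v) = α π(u, pa v)`. Induction on the depths of `u` and
`v` yields `E[N_u N_v] = λ² + λ π(u, v)`, starting from `E[N_v] = λ` and
`E[N_v²] = λ² + λ`; the latter follows from the first two moments of `Bin(n, α) + Poisson`.
-/

open MeasureTheory ProbabilityTheory
open scoped ProbabilityTheory

/-- The max-product matrix product `(A ⊛ B)_{ij} = max_k A_{ik} B_{kj}`. -/
noncomputable def maxProd {V : Type} [Fintype V] [Nonempty V]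
    (A B : V → V → ℝ) : V → V → ℝ :=
  fun i j => Finset.univ.sup' Finset.univ_nonempty (fun k => A i k * B k j)

/-- Powers of a matrix with respect to the max-product matrix product
(`maxPow A 0` is the identity matrix). -/
noncomputable def maxPow {V : Type} [Fintype V] [Nonempty V] [DecidableEq V]
    (A : V → V → ℝ) : ℕ → V → V → ℝ
  | 0 => fun i j => if i = j then (1 : ℝ) else 0
  | (n + 1) => maxProd (maxPow A n) A

open scoped ENNReal

namespace SimpleGraph

variable {V : Type*} {G : SimpleGraph V}

theorem IsAcyclic.eq_concat_or_eq_concat (hG : G.IsAcyclic) {u k v : V} {p : G.Walk u k}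
    {q : G.Walk u v} (hp : p.IsPath) (hq : q.IsPath) (h : G.Adj k v) :
    q = p.concat h ∨ p = q.concat h.symm := by
  by_cases hk : k ∈ q.support
  · exact .inl (hG.path_concat hp hq h hk)
  · exact .inr (hG.path_concat hq hp h.symm
      (hG.mem_support_of_ne_mem_support_of_adj_of_isPath hp hq h hk))

namespace IsTree

variable (hG : G.IsTree)

noncomputable def treePath (u v : V) : G.Walk u v :=
  (hG.connected.exists_path_of_dist u v).choose

theorem isPath_treePath (u v : V) : (hG.treePath u v).IsPath :=
  (hG.connected.exists_path_of_dist u v).choose_spec.1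

theorem length_treePath (u v : V) : (hG.treePath u v).length = G.dist u v :=
  (hG.connected.exists_path_of_dist u v).choose_spec.2

variable {hG} in
theorem eq_treePath {u v : V} {p : G.Walk u v} (hp : p.IsPath) : p = hG.treePath u v :=
  congrArg Subtype.val ((hG.isAcyclic.subsingleton_path u v).elim ⟨p, hp⟩
    ⟨_, hG.isPath_treePath u v⟩)

theorem dist_add_dist_of_mem_support {u x v : V} (hx : x ∈ (hG.treePath u v).support) :
    G.dist u x + G.dist x v = G.dist u v := by
  classical
  have hp := hG.isPath_treePath u v
  rw [← hG.length_treePath u x, ← hG.length_treePath x v, ← hG.length_treePath u v,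
    ← eq_treePath (hp.takeUntil hx), ← eq_treePath (hp.dropUntil hx), ← Walk.length_append,
    Walk.take_spec]

theorem mem_support_treePath_comm {u v y : V} :
    y ∈ (hG.treePath u v).support ↔ y ∈ (hG.treePath v u).support := by
  rw [← eq_treePath (hG.isPath_treePath v u).reverse, Walk.support_reverse, List.mem_reverse]

theorem mem_support_treePath_or {u v y : V} (x : V) (hy : y ∈ (hG.treePath u v).support) :
    y ∈ (hG.treePath u x).support ∨ y ∈ (hG.treePath x v).support := by
  classical
  rw [← eq_treePath ((hG.treePath u x).append (hG.treePath x v)).bypass_isPath] at hy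
  exact (Walk.mem_support_append_iff _ _).mp (Walk.support_bypass_subset_support _ hy)

end IsTree

variable {u k v : V}

namespace Walk

theorem prod_map_edges_concat (alpha : Sym2 V → ℝ) (p : G.Walk u k) (h : G.Adj k v) :
    ((p.concat h).edges.map alpha).prod = (p.edges.map alpha).prod * alpha s(k, v) := by
  simp [edges_concat]

theorem prod_map_edges_mem_Icc {alpha : Sym2 V → ℝ}
    (halpha : ∀ e ∈ G.edgeSet, alpha e ∈ Set.Icc (0 : ℝ) 1) (p : G.Walk u v) :
    (p.edges.map alpha).prod ∈ Set.Icc (0 : ℝ) 1 :=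
  unitInterval.submonoid.list_prod_mem <| by
    simpa using fun e he => halpha e (p.edges_subset_edgeSet he)

end Walk

namespace IsTree

variable (hG : G.IsTree) (alpha : Sym2 V → ℝ)

noncomputable def pathProd (u v : V) : ℝ := ((hG.treePath u v).edges.map alpha).prod

variable {hG alpha}

theorem pathProd_eq {p : G.Walk u v} (hp : p.IsPath) :
    hG.pathProd alpha u v = (p.edges.map alpha).prod := by
  rw [pathProd, ← eq_treePath hp]

theorem pathProd_self (v : V) : hG.pathProd alpha v v = 1 := by
  simp [pathProd_eq Walk.IsPath.nil]

theorem pathProd_comm (u v : V) : hG.pathProd alpha u v = hG.pathProd alpha v u := by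
  rw [pathProd_eq (hG.isPath_treePath v u).reverse, Walk.edges_reverse, List.map_reverse,
    List.prod_reverse, pathProd]

theorem pathProd_mem_Icc (halpha : ∀ e ∈ G.edgeSet, alpha e ∈ Set.Icc (0 : ℝ) 1) (u v : V) :
    hG.pathProd alpha u v ∈ Set.Icc (0 : ℝ) 1 :=
  Walk.prod_map_edges_mem_Icc halpha _

/-- Either the path to `v` extends the path to `k`, or the other way round. -/
theorem pathProd_mul_le (halpha : ∀ e ∈ G.edgeSet, alpha e ∈ Set.Icc (0 : ℝ) 1)
    (h : G.Adj k v) : hG.pathProd alpha u k * alpha s(k, v) ≤ hG.pathProd alpha u v := by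
  have hkv := halpha _ (G.mem_edgeSet.2 h)
  rcases hG.isAcyclic.eq_concat_or_eq_concat (hG.isPath_treePath u k)
    (hG.isPath_treePath u v) h with hq | hp
  · rw [pathProd, pathProd, hq, Walk.prod_map_edges_concat]
  · rw [pathProd, hp, Walk.prod_map_edges_concat, ← pathProd, Sym2.eq_swap]
    have hπ := (hG.pathProd_mem_Icc halpha u v).1
    have h₁ := mul_le_mul_of_nonneg_left hkv.2 (mul_nonneg hπ hkv.1)
    have h₂ := mul_le_mul_of_nonneg_left hkv.2 hπ
    linarith

end IsTree

end SimpleGraph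

open SimpleGraph

section WeightedAdj

variable {V : Type*} [DecidableEq V] (G : SimpleGraph V) [DecidableRel G.Adj]
  (alpha : Sym2 V → ℝ)

def weightedAdj (i j : V) : ℝ := if i = j then 1 else if G.Adj i j then alpha s(i, j) else 0

variable {G alpha}

theorem weightedAdj_nonneg (halpha : ∀ e ∈ G.edgeSet, alpha e ∈ Set.Icc (0 : ℝ) 1) (i j : V) :
    0 ≤ weightedAdj G alpha i j := by
  unfold weightedAdj
  split_ifs with _ hadj
  exacts [zero_le_one, (halpha _ (G.mem_edgeSet.2 hadj)).1, le_rfl]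

end WeightedAdj

section MaxProduct

variable {V : Type} [Fintype V] [DecidableEq V] [Nonempty V]

theorem le_maxPow_succ (A : V → V → ℝ) (n : ℕ) (u k v : V) :
    maxPow A n u k * A k v ≤ maxPow A (n + 1) u v :=
  Finset.le_sup' (fun k => maxPow A n u k * A k v) (Finset.mem_univ k)

theorem one_le_maxPow_self {A : V → V → ℝ} (hA : ∀ i, A i i = 1) (n : ℕ) (v : V) :
    1 ≤ maxPow A n v v := by
  induction n with
  | zero => simp [maxPow]
  | succ n ih =>
    calc 1 ≤ maxPow A n v v * A v v := by rwa [hA, mul_one]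
      _ ≤ maxPow A (n + 1) v v := le_maxPow_succ A n v v v

variable {G : SimpleGraph V} [DecidableRel G.Adj] {alpha : Sym2 V → ℝ}

theorem prod_map_edges_le_maxPow (halpha : ∀ e ∈ G.edgeSet, alpha e ∈ Set.Icc (0 : ℝ) 1)
    {u v : V} (q : G.Walk u v) {n : ℕ} (hn : q.length ≤ n) :
    (q.edges.map alpha).prod ≤ maxPow (weightedAdj G alpha) n u v := by
  induction q using Walk.concatRec generalizing n with
  | Hnil => simpa using one_le_maxPow_self (by simp [weightedAdj]) n _
  | @Hconcat u k v p h ih =>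
    obtain ⟨n, rfl⟩ : ∃ m, n = m + 1 := ⟨n - 1, by simp at hn; omega⟩
    have hkv := halpha _ (G.mem_edgeSet.2 h)
    calc ((p.concat h).edges.map alpha).prod = (p.edges.map alpha).prod * alpha s(k, v) :=
          Walk.prod_map_edges_concat alpha p h
      _ ≤ maxPow (weightedAdj G alpha) n u k * weightedAdj G alpha k v := by
          rw [weightedAdj, if_neg h.ne, if_pos h]
          exact mul_le_mul_of_nonneg_right (ih (by simp at hn; omega)) hkv.1
      _ ≤ _ := le_maxPow_succ _ n u k v

theorem maxPow_le_pathProd (hG : G.IsTree)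
    (halpha : ∀ e ∈ G.edgeSet, alpha e ∈ Set.Icc (0 : ℝ) 1) (n : ℕ) (u v : V) :
    maxPow (weightedAdj G alpha) n u v ≤ hG.pathProd alpha u v := by
  induction n generalizing v with
  | zero =>
    by_cases huv : u = v
    · subst huv; simp [maxPow, IsTree.pathProd_self]
    · simpa [maxPow, huv] using (hG.pathProd_mem_Icc halpha u v).1
  | succ n ih =>
    refine Finset.sup'_le Finset.univ_nonempty _ fun k _ => ?_
    calc maxPow (weightedAdj G alpha) n u k * weightedAdj G alpha k v
        ≤ hG.pathProd alpha u k * weightedAdj G alpha k v := by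
          gcongr
          · exact weightedAdj_nonneg halpha k v
          · exact ih k
      _ ≤ hG.pathProd alpha u v := by
          unfold weightedAdj
          split_ifs with hkv hadj
          · subst hkv; rw [mul_one]
          · exact IsTree.pathProd_mul_le halpha hadj
          · simpa using (hG.pathProd_mem_Icc halpha u v).1

theorem maxPow_card_eq_prod (hG : G.IsTree)
    (halpha : ∀ e ∈ G.edgeSet, alpha e ∈ Set.Icc (0 : ℝ) 1) {u v : V} {p : G.Walk u v}
    (hp : p.IsPath) :
    maxPow (weightedAdj G alpha) (Fintype.card V) u v = (p.edges.map alpha).prod :=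
  le_antisymm (IsTree.pathProd_eq (hG := hG) hp ▸ maxPow_le_pathProd hG halpha _ u v)
    (prod_map_edges_le_maxPow halpha p hp.length_lt.le)

end MaxProduct

section Poisson

theorem hasSum_poissonProb (μ : ℝ) : HasSum (poissonProb μ) 1 := by
  have h := (NormedSpace.expSeries_div_hasSum_exp μ).mul_left (Real.exp (-μ))
  rw [← Real.exp_eq_exp_ℝ, ← Real.exp_add, neg_add_cancel, Real.exp_zero] at h
  exact h.congr_fun fun k => mul_div_assoc _ _ _

theorem hasSum_descFactorial_mul_poissonProb (μ : ℝ) (j : ℕ) :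
    HasSum (fun k => (k.descFactorial j : ℝ) * poissonProb μ k) (μ ^ j) := by
  rw [← hasSum_nat_add_iff' j, Finset.sum_eq_zero fun k hk => by
    simp [Nat.descFactorial_eq_zero_iff_lt.2 (Finset.mem_range.1 hk)], sub_zero]
  have h := (hasSum_poissonProb μ).mul_left (μ ^ j)
  rw [mul_one] at h
  refine h.congr_fun fun k => ?_
  have hfac := Nat.factorial_mul_descFactorial (Nat.le_add_left j k)
  rw [Nat.add_sub_cancel] at hfac
  have hk : (k.factorial : ℝ) ≠ 0 := by positivity
  simp only [poissonProb, ← hfac, Nat.cast_mul, pow_add]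
  field_simp

variable {Ω : Type*} [MeasurableSpace Ω] {P : Measure Ω}

theorem lintegral_comp_eq_tsum {X : Ω → ℕ} (hX : Measurable X) (g : ℕ → ℝ≥0∞) :
    ∫⁻ ω, g (X ω) ∂P = ∑' k, g k * P (X ⁻¹' {k}) := by
  rw [← lintegral_map (measurable_of_countable g) hX,
    lintegral_countable']
  simp_rw [Measure.map_apply hX (measurableSet_singleton _)]

theorem lintegral_descFactorial_of_poisson {X : Ω → ℕ} (hX : Measurable X) {μ : ℝ} (hμ : 0 ≤ μ)
    (hlaw : ∀ k, P {ω | X ω = k} = ENNReal.ofReal (poissonProb μ k)) (j : ℕ) :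
    ∫⁻ ω, ((X ω).descFactorial j : ℝ≥0∞) ∂P = ENNReal.ofReal (μ ^ j) := by
  rw [lintegral_comp_eq_tsum hX (fun k => (k.descFactorial j : ℝ≥0∞))]
  have hnn : ∀ k, 0 ≤ (k.descFactorial j : ℝ) * poissonProb μ k := fun k => by
    unfold poissonProb; positivity
  rw [← (hasSum_descFactorial_mul_poissonProb μ j).tsum_eq,
    ENNReal.ofReal_tsum_of_nonneg hnn (hasSum_descFactorial_mul_poissonProb μ j).summable]
  refine tsum_congr fun k => ?_
  rw [ENNReal.ofReal_mul (Nat.cast_nonneg _), ENNReal.ofReal_natCast, ← hlaw]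
  rfl

theorem lintegral_of_poisson {X : Ω → ℕ} (hX : Measurable X) {μ : ℝ} (hμ : 0 ≤ μ)
    (hlaw : ∀ k, P {ω | X ω = k} = ENNReal.ofReal (poissonProb μ k)) :
    ∫⁻ ω, (X ω : ℝ≥0∞) ∂P = ENNReal.ofReal μ := by
  simpa using lintegral_descFactorial_of_poisson hX hμ hlaw 1

theorem lintegral_sq_of_poisson {X : Ω → ℕ} (hX : Measurable X) {μ : ℝ} (hμ : 0 ≤ μ)
    (hlaw : ∀ k, P {ω | X ω = k} = ENNReal.ofReal (poissonProb μ k)) :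
    ∫⁻ ω, (X ω : ℝ≥0∞) ^ 2 ∂P = ENNReal.ofReal (μ ^ 2 + μ) := by
  have hsq : ∀ k : ℕ, (k : ℝ≥0∞) ^ 2 = (k.descFactorial 2 : ℝ≥0∞) + k := fun k => by
    norm_cast
    rcases k with _ | k <;> simp [Nat.descFactorial_succ]
    ring
  simp_rw [hsq]
  rw [lintegral_add_left (by fun_prop), lintegral_descFactorial_of_poisson hX hμ hlaw,
    lintegral_of_poisson hX hμ hlaw, ENNReal.ofReal_add (by positivity) hμ]

end Poisson

section CoordinateSigma

variable {ι Ω β : Type*} {mΩ : MeasurableSpace Ω} [mβ : MeasurableSpace β] (X : ι → Ω → β)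

abbrev coordSigma (S : Set ι) : MeasurableSpace Ω := ⨆ j ∈ S, mβ.comap (X j)

variable {X}

theorem coordSigma_le (hX : ∀ j, Measurable (X j)) (S : Set ι) : coordSigma X S ≤ mΩ :=
  iSup₂_le fun j _ => (hX j).comap_le

theorem coordSigma_mono {S T : Set ι} (h : S ⊆ T) : coordSigma X S ≤ coordSigma X T :=
  biSup_mono h

theorem measurable_coordSigma {S : Set ι} {j : ι} (hj : j ∈ S) :
    Measurable[coordSigma X S] (X j) :=
  measurable_iff_comap_le.2 (le_iSup₂ (f := fun j (_ : j ∈ S) => mβ.comap (X j)) j hj)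

theorem indep_coordSigma {μ : Measure Ω} (hX : ∀ j, Measurable (X j)) (hind : iIndepFun X μ)
    {S T : Set ι} (h : Disjoint S T) : Indep (coordSigma X S) (coordSigma X T) μ :=
  indep_iSup_of_disjoint (fun j => (hX j).comap_le) hind h

end CoordinateSigma

section Freezing

theorem Measurable.natCast {Ω α : Type*} {m : MeasurableSpace Ω} [MeasurableSpace α] [NatCast α]
    {f : Ω → ℕ} (hf : Measurable[m] f) : Measurable[m] fun ω => (f ω : α) :=
  measurable_from_top.comp hf

variable {Ω : Type*} {mΩ : MeasurableSpace Ω} {μ : Measure Ω}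

theorem Measurable.apply_nat {β : Type*} [MeasurableSpace β] {Y : Ω → ℕ} (hY : Measurable Y)
    {Z : ℕ → Ω → β} (hZ : ∀ n, Measurable (Z n)) : Measurable fun ω => Z (Y ω) ω :=
  (measurable_from_prod_countable_right (f := fun p : ℕ × Ω => Z p.1 p.2) hZ).comp
    (hY.prodMk measurable_id)

theorem tsum_indicator_mul_eq {Y : Ω → ℕ} (F : Ω → ℝ≥0∞) (g : ℕ → ℝ≥0∞) (ω : Ω) :
    ∑' n, {ω | Y ω = n}.indicator F ω * g n = F ω * g (Y ω) := by
  rw [tsum_eq_single (Y ω) fun n hn => by simp [Set.indicator_of_notMem, Ne.symm hn]]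
  simp

theorem lintegral_mul_apply_of_indep {m m' : MeasurableSpace Ω} (hm : m ≤ mΩ) (hm' : m' ≤ mΩ)
    (hind : Indep m m' μ) {F : Ω → ℝ≥0∞} (hF : Measurable[m] F) {Y : Ω → ℕ}
    (hY : Measurable[m] Y) {Z : ℕ → Ω → ℝ≥0∞} (hZ : ∀ n, Measurable[m'] (Z n)) :
    ∫⁻ ω, F ω * Z (Y ω) ω ∂μ = ∫⁻ ω, F ω * ∫⁻ ω', Z (Y ω) ω' ∂μ ∂μ := by
  have hFn : ∀ n, Measurable[m] ({ω | Y ω = n}.indicator F) := fun n =>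
    hF.indicator (hY (measurableSet_singleton n))
  calc ∫⁻ ω, F ω * Z (Y ω) ω ∂μ
      = ∫⁻ ω, ∑' n, {ω | Y ω = n}.indicator F ω * Z n ω ∂μ := by
        simp_rw [tsum_indicator_mul_eq F (fun n => Z n _)]
    _ = ∑' n, ∫⁻ ω, {ω | Y ω = n}.indicator F ω * Z n ω ∂μ :=
        lintegral_tsum fun n => (((hFn n).mono hm le_rfl).mul ((hZ n).mono hm' le_rfl)).aemeasurable
    _ = ∑' n, ∫⁻ ω, {ω | Y ω = n}.indicator F ω * ∫⁻ ω', Z n ω' ∂μ ∂μ := by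
        refine tsum_congr fun n => ?_
        rw [lintegral_mul_eq_lintegral_mul_lintegral_of_independent_measurableSpace hm hm' hind
          (hFn n) (hZ n), lintegral_mul_const _ ((hFn n).mono hm le_rfl)]
    _ = ∫⁻ ω, F ω * ∫⁻ ω', Z (Y ω) ω' ∂μ ∂μ := by
        rw [← lintegral_tsum fun n => ((hFn n).mono hm le_rfl).aemeasurable.mul_const _]
        simp_rw [tsum_indicator_mul_eq F (fun n => ∫⁻ ω', Z n ω' ∂μ)]

end Freezing

theorem integral_natCast_eq_of_lintegral {Ω : Type*} [MeasurableSpace Ω] {μ : Measure Ω}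
    {f : Ω → ℕ} (hf : Measurable f) {c : ℝ} (hc : 0 ≤ c)
    (h : ∫⁻ ω, (f ω : ℝ≥0∞) ∂μ = ENNReal.ofReal c) : ∫ ω, (f ω : ℝ) ∂μ = c := by
  rw [integral_eq_lintegral_of_nonneg_ae (ae_of_all _ fun _ => Nat.cast_nonneg _)
    hf.natCast.aestronglyMeasurable]
  simp_rw [ENNReal.ofReal_natCast, h, ENNReal.toReal_ofReal hc]

namespace MPMRF

variable {V : Type} [Fintype V] [DecidableEq V] {G : SimpleGraph V} {lam : ℝ}
  {alpha : Sym2 V → ℝ} {Ω : Type} [MeasureSpace Ω] (M : MPMRF G lam alpha Ω)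

/-- The ancestors of `v`, `v` included. -/
def anc (v : V) : Set V := {x | x ∈ (M.isTree.treePath M.root v).support}

theorem mem_anc_self (v : V) : v ∈ M.anc v := Walk.end_mem_support _

theorem notMem_anc_pa {v : V} (hv : v ≠ M.root) : v ∉ M.anc (M.pa v) := fun h => by
  have hsplit := M.isTree.dist_add_dist_of_mem_support h
  rw [dist_eq_one_iff_adj.2 (M.pa_adj v hv).symm] at hsplit
  have := M.pa_dist v hv
  omega

theorem treePath_root_eq_concat {v : V} (hv : v ≠ M.root) :
    M.isTree.treePath M.root v =
      (M.isTree.treePath M.root (M.pa v)).concat (M.pa_adj v hv) :=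
  (IsTree.eq_treePath ((M.isTree.isPath_treePath _ _).concat (M.notMem_anc_pa hv) _)).symm

theorem anc_pa_subset {v : V} (hv : v ≠ M.root) : M.anc (M.pa v) ⊆ M.anc v := fun x hx => by
  change x ∈ (M.isTree.treePath M.root v).support
  rw [M.treePath_root_eq_concat hv]
  exact Walk.support_subset_support_concat _ _ hx

theorem notMem_anc_of_dist_le {u v : V} (hne : u ≠ v)
    (hle : G.dist M.root u ≤ G.dist M.root v) : v ∉ M.anc u := fun h => by
  have hsplit := M.isTree.dist_add_dist_of_mem_support h
  have : G.dist v u ≠ 0 := fun h0 => hne (M.isTree.connected.dist_eq_zero_iff.1 h0).symm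
  omega

/-- Otherwise the path from `u` to `pa v` passes through `v`, which then lies on the path from
`u` to the root or on the one from the root to `pa v`. -/
theorem pathProd_eq_pathProd_pa_mul {u v : V} (hv : v ≠ M.root) (hvu : v ∉ M.anc u) :
    M.isTree.pathProd alpha u v = M.isTree.pathProd alpha u (M.pa v) * alpha s(M.pa v, v) := by
  rcases M.isTree.isAcyclic.eq_concat_or_eq_concat (M.isTree.isPath_treePath u (M.pa v))
    (M.isTree.isPath_treePath u v) (M.pa_adj v hv) with hq | hp
  · rw [IsTree.pathProd, hq, Walk.prod_map_edges_concat, ← IsTree.pathProd]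
  · have hmem : v ∈ (M.isTree.treePath u (M.pa v)).support := by
      rw [hp]; exact Walk.support_subset_support_concat _ _ (Walk.end_mem_support _)
    rcases M.isTree.mem_support_treePath_or M.root hmem with h | h
    · exact absurd (M.isTree.mem_support_treePath_comm.1 h) hvu
    · exact absurd h (M.notMem_anc_pa hv)

theorem induction_pa {P : V → Prop} (root : P M.root)
    (pa : ∀ v, v ≠ M.root → P (M.pa v) → P v) (v : V) : P v := by
  induction h : G.dist M.root v using Nat.strong_induction_on generalizing v with
  | _ n ih =>
    by_cases hv : v = M.root
    · exact hv ▸ root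
    · exact pa v hv (ih _ (h ▸ M.pa_dist v hv ▸ Nat.lt_succ_self _) _ rfl)

def coord : V ⊕ V × ℕ → Ω → ℕ := Sum.elim M.L fun p => M.I p.1 p.2

theorem measurable_coord : ∀ j, Measurable (M.coord j)
  | .inl v => M.meas_L v
  | .inr p => M.meas_I p.1 p.2

abbrev vertexSigma (s : Set V) : MeasurableSpace Ω :=
  coordSigma M.coord (Sum.elim id Prod.fst ⁻¹' s)

theorem vertexSigma_le (s : Set V) : M.vertexSigma s ≤ ‹MeasureSpace Ω›.toMeasurableSpace :=
  coordSigma_le M.measurable_coord _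

theorem vertexSigma_mono {s t : Set V} (h : s ⊆ t) : M.vertexSigma s ≤ M.vertexSigma t :=
  coordSigma_mono (Set.preimage_mono h)

theorem indep_vertexSigma {s t : Set V} (h : Disjoint s t) :
    Indep (M.vertexSigma s) (M.vertexSigma t) ℙ :=
  indep_coordSigma M.measurable_coord M.indep (h.preimage _)

def thinCoords (v : V) (n : ℕ) : Set (V ⊕ V × ℕ) :=
  insert (.inl v) ((fun i => .inr (v, i)) '' Set.Iio n)

/-- `N v` on the event `N (pa v) = n`: the thinning `α ∘ n` plus the innovation `L v`. -/
def thinStep (v : V) (n : ℕ) (ω : Ω) : ℕ := (∑ i ∈ Finset.range n, M.I v i ω) + M.L v ω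

theorem N_eq_thinStep {v : V} (hv : v ≠ M.root) (ω : Ω) :
    M.N v ω = M.thinStep v (M.N (M.pa v) ω) ω :=
  M.N_rec v hv ω

theorem thinStep_succ (v : V) (n : ℕ) (ω : Ω) :
    M.thinStep v (n + 1) ω = M.thinStep v n ω + M.I v n ω := by
  simp only [thinStep, Finset.sum_range_succ]; ring

theorem measurable_thinStep (v : V) (n : ℕ) :
    Measurable[coordSigma M.coord (thinCoords v n)] (M.thinStep v n) := by
  refine Finset.measurable_sum _ (fun i hi => ?_) |>.add ?_
  · exact measurable_coordSigma (X := M.coord) (j := .inr (v, i))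
      (Set.mem_insert_of_mem _ ⟨i, Finset.mem_range.1 hi, rfl⟩)
  · exact measurable_coordSigma (X := M.coord) (j := .inl v) (Set.mem_insert _ _)

theorem measurable_thinStep_vertexSigma (v : V) (n : ℕ) :
    Measurable[M.vertexSigma {v}] (M.thinStep v n) :=
  (M.measurable_thinStep v n).mono (coordSigma_mono (by
    rintro _ (rfl | ⟨i, -, rfl⟩) <;> rfl)) le_rfl

theorem measurable_N_anc (v : V) : Measurable[M.vertexSigma (M.anc v)] (M.N v) := by
  induction v using M.induction_pa with
  | root =>
    rw [M.N_root]
    exact measurable_coordSigma (X := M.coord) (j := .inl M.root) (M.mem_anc_self _)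
  | pa v hv ih =>
    rw [funext (M.N_eq_thinStep hv)]
    exact (ih.mono (M.vertexSigma_mono (M.anc_pa_subset hv)) le_rfl).apply_nat fun n =>
      (M.measurable_thinStep_vertexSigma v n).mono
        (M.vertexSigma_mono (Set.singleton_subset_iff.2 (M.mem_anc_self v))) le_rfl

theorem alpha_pa_mem {v : V} (hv : v ≠ M.root) : alpha s(M.pa v, v) ∈ Set.Icc (0 : ℝ) 1 :=
  M.alpha_mem _ (G.mem_edgeSet.2 (M.pa_adj v hv))

theorem I_sq (v : V) (i : ℕ) (ω : Ω) : (M.I v i ω : ℝ≥0∞) ^ 2 = M.I v i ω := by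
  rcases Nat.le_one_iff_eq_zero_or_eq_one.1 (M.I_le_one v i ω) with h | h <;> simp [h]

theorem lintegral_I {v : V} (hv : v ≠ M.root) (i : ℕ) :
    ∫⁻ ω, (M.I v i ω : ℝ≥0∞) = ENNReal.ofReal (alpha s(M.pa v, v)) := by
  have hind : ∀ ω, (M.I v i ω : ℝ≥0∞) = {ω | M.I v i ω = 1}.indicator 1 ω := fun ω => by
    rcases Nat.le_one_iff_eq_zero_or_eq_one.1 (M.I_le_one v i ω) with h | h <;> simp [h]
  have hmeas : MeasurableSet {ω | M.I v i ω = 1} := M.meas_I v i (measurableSet_singleton 1)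
  rw [lintegral_congr hind, lintegral_indicator_one hmeas, M.I_bern v hv i]

theorem lintegral_L {v : V} (hv : v ≠ M.root) :
    ∫⁻ ω, (M.L v ω : ℝ≥0∞) = ENNReal.ofReal (lam * (1 - alpha s(M.pa v, v))) := by
  obtain ⟨-, hα₁⟩ := M.alpha_pa_mem hv
  have := M.lam_pos
  exact lintegral_of_poisson (M.meas_L v) (by positivity) (M.L_poisson v hv)

theorem lintegral_thinStep {v : V} (hv : v ≠ M.root) (n : ℕ) :
    ∫⁻ ω, (M.thinStep v n ω : ℝ≥0∞) =
      ENNReal.ofReal (n * alpha s(M.pa v, v) + lam * (1 - alpha s(M.pa v, v))) := by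
  obtain ⟨hα₀, hα₁⟩ := M.alpha_pa_mem hv
  have := M.lam_pos
  have hI := M.meas_I v
  simp only [thinStep, Nat.cast_add, Nat.cast_sum]
  rw [lintegral_add_left (by fun_prop), lintegral_finsetSum _ fun i _ => by fun_prop,
    Finset.sum_congr rfl fun i _ => M.lintegral_I hv i, M.lintegral_L hv, Finset.sum_const,
    Finset.card_range, nsmul_eq_mul, ENNReal.ofReal_add (by positivity) (by positivity),
    ENNReal.ofReal_mul (Nat.cast_nonneg n), ENNReal.ofReal_natCast]

/-- Mean squared plus variance of `Bin(n, α) + Poisson(λ (1 - α))`. -/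
theorem lintegral_thinStep_sq {v : V} (hv : v ≠ M.root) (n : ℕ) :
    ∫⁻ ω, (M.thinStep v n ω : ℝ≥0∞) ^ 2 =
      ENNReal.ofReal ((n * alpha s(M.pa v, v) + lam * (1 - alpha s(M.pa v, v))) ^ 2
        + n * alpha s(M.pa v, v) * (1 - alpha s(M.pa v, v))
        + lam * (1 - alpha s(M.pa v, v))) := by
  obtain ⟨hα₀, hα₁⟩ := M.alpha_pa_mem hv
  have := M.lam_pos
  induction n with
  | zero =>
    simpa [thinStep] using lintegral_sq_of_poisson (M.meas_L v) (by positivity) (M.L_poisson v hv)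
  | succ n ih =>
    have hdisj : Disjoint (thinCoords v n) {.inr (v, n)} :=
      Set.disjoint_singleton_right.2 (by simp [thinCoords])
    have hprod : ∫⁻ ω, (M.thinStep v n ω : ℝ≥0∞) * M.I v n ω =
        (∫⁻ ω, (M.thinStep v n ω : ℝ≥0∞)) * ∫⁻ ω, (M.I v n ω : ℝ≥0∞) :=
      lintegral_mul_eq_lintegral_mul_lintegral_of_independent_measurableSpace
        (coordSigma_le M.measurable_coord _) (coordSigma_le M.measurable_coord _)
        (indep_coordSigma M.measurable_coord M.indep hdisj)
        ((M.measurable_thinStep v n).natCast)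
        (measurable_coordSigma (X := M.coord) (Set.mem_singleton (Sum.inr (v, n)))).natCast
    have hS := ((M.measurable_thinStep v n).mono (coordSigma_le M.measurable_coord _)
      le_rfl).natCast (α := ℝ≥0∞)
    have hI := (M.meas_I v n).natCast (α := ℝ≥0∞)
    calc ∫⁻ ω, (M.thinStep v (n + 1) ω : ℝ≥0∞) ^ 2
        = ∫⁻ ω, (M.thinStep v n ω : ℝ≥0∞) ^ 2
            + 2 * ((M.thinStep v n ω : ℝ≥0∞) * M.I v n ω) + M.I v n ω := by
          simp_rw [M.thinStep_succ, Nat.cast_add, add_sq, M.I_sq, mul_assoc]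
      _ = (∫⁻ ω, (M.thinStep v n ω : ℝ≥0∞) ^ 2)
            + 2 * (∫⁻ ω, (M.thinStep v n ω : ℝ≥0∞) * M.I v n ω)
            + ∫⁻ ω, (M.I v n ω : ℝ≥0∞) := by
          rw [lintegral_add_left (by fun_prop), lintegral_add_left (by fun_prop),
            lintegral_const_mul _ (by fun_prop)]
      _ = _ := by
          rw [hprod, ih, M.lintegral_thinStep hv, M.lintegral_I hv,
            ← ENNReal.ofReal_mul (by positivity), ← ENNReal.ofReal_ofNat 2,
            ← ENNReal.ofReal_mul (by positivity), ← ENNReal.ofReal_add (by positivity)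
              (by positivity), ← ENNReal.ofReal_add (by positivity) (by positivity)]
          congr 1
          push_cast
          ring

theorem lintegral_mul_N {v : V} (hv : v ≠ M.root) {s : Set V} (hvs : v ∉ s)
    (hpa : M.anc (M.pa v) ⊆ s) {F : Ω → ℝ≥0∞} (hF : Measurable[M.vertexSigma s] F) :
    ∫⁻ ω, F ω * M.N v ω =
      ENNReal.ofReal (alpha s(M.pa v, v)) * (∫⁻ ω, F ω * M.N (M.pa v) ω)
        + ENNReal.ofReal (lam * (1 - alpha s(M.pa v, v))) * ∫⁻ ω, F ω := by
  obtain ⟨hα₀, hα₁⟩ := M.alpha_pa_mem hv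
  have := M.lam_pos
  have hY := (M.measurable_N_anc (M.pa v)).mono (M.vertexSigma_mono hpa) le_rfl
  have hFm := hF.mono (M.vertexSigma_le s) le_rfl
  have hYm := (M.meas_N (M.pa v)).natCast (α := ℝ≥0∞)
  calc ∫⁻ ω, F ω * M.N v ω
      = ∫⁻ ω, F ω * M.thinStep v (M.N (M.pa v) ω) ω := by simp_rw [M.N_eq_thinStep hv]
    _ = ∫⁻ ω, F ω * ENNReal.ofReal (M.N (M.pa v) ω * alpha s(M.pa v, v)
          + lam * (1 - alpha s(M.pa v, v))) := by
        rw [lintegral_mul_apply_of_indep (M.vertexSigma_le s) (M.vertexSigma_le {v})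
          (M.indep_vertexSigma (Set.disjoint_singleton_right.2 hvs)) hF hY
          fun n => (M.measurable_thinStep_vertexSigma v n).natCast]
        simp_rw [M.lintegral_thinStep hv]
    _ = ∫⁻ ω, ENNReal.ofReal (alpha s(M.pa v, v)) * (F ω * M.N (M.pa v) ω)
          + ENNReal.ofReal (lam * (1 - alpha s(M.pa v, v))) * F ω := by
        refine lintegral_congr fun ω => ?_
        rw [ENNReal.ofReal_add (by positivity) (by positivity),
          ENNReal.ofReal_mul (Nat.cast_nonneg _), ENNReal.ofReal_natCast]
        ring
    _ = _ := by
        rw [lintegral_add_left (by fun_prop), lintegral_const_mul _ (by fun_prop),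
          lintegral_const_mul _ hFm]

variable [IsProbabilityMeasure (ℙ : Measure Ω)]

theorem lintegral_N (v : V) : ∫⁻ ω, (M.N v ω : ℝ≥0∞) = ENNReal.ofReal lam := by
  induction v using M.induction_pa with
  | root =>
    rw [M.N_root]
    exact lintegral_of_poisson (M.meas_L _) M.lam_pos.le M.L_root_poisson
  | pa v hv ih =>
    obtain ⟨hα₀, hα₁⟩ := M.alpha_pa_mem hv
    have := M.lam_pos
    have h := M.lintegral_mul_N hv (M.notMem_anc_pa hv) subset_rfl (F := 1) measurable_const
    simp only [Pi.one_apply, one_mul, lintegral_const, measure_univ, mul_one, ih] at h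
    rw [h, ← ENNReal.ofReal_mul hα₀, ← ENNReal.ofReal_add (by positivity) (by positivity)]
    congr 1
    ring

theorem lintegral_N_sq_eq {v : V} (hv : v ≠ M.root) :
    ∫⁻ ω, (M.N v ω : ℝ≥0∞) ^ 2 =
      ENNReal.ofReal (alpha s(M.pa v, v) ^ 2) * (∫⁻ ω, (M.N (M.pa v) ω : ℝ≥0∞) ^ 2)
        + ENNReal.ofReal (2 * alpha s(M.pa v, v) * (lam * (1 - alpha s(M.pa v, v)))
            + alpha s(M.pa v, v) * (1 - alpha s(M.pa v, v))) * (∫⁻ ω, (M.N (M.pa v) ω : ℝ≥0∞))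
        + ENNReal.ofReal ((lam * (1 - alpha s(M.pa v, v))) ^ 2
            + lam * (1 - alpha s(M.pa v, v))) := by
  obtain ⟨hα₀, hα₁⟩ := M.alpha_pa_mem hv
  have := M.lam_pos
  have hYm := (M.meas_N (M.pa v)).natCast (α := ℝ≥0∞)
  calc ∫⁻ ω, (M.N v ω : ℝ≥0∞) ^ 2
      = ∫⁻ ω, 1 * (M.thinStep v (M.N (M.pa v) ω) ω : ℝ≥0∞) ^ 2 := by
        simp_rw [M.N_eq_thinStep hv, one_mul]
    _ = ∫⁻ ω, ENNReal.ofReal (alpha s(M.pa v, v) ^ 2) * (M.N (M.pa v) ω : ℝ≥0∞) ^ 2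
          + ENNReal.ofReal (2 * alpha s(M.pa v, v) * (lam * (1 - alpha s(M.pa v, v)))
            + alpha s(M.pa v, v) * (1 - alpha s(M.pa v, v))) * M.N (M.pa v) ω
          + ENNReal.ofReal ((lam * (1 - alpha s(M.pa v, v))) ^ 2
            + lam * (1 - alpha s(M.pa v, v))) := by
        rw [lintegral_mul_apply_of_indep (M.vertexSigma_le _) (M.vertexSigma_le {v})
          (M.indep_vertexSigma (Set.disjoint_singleton_right.2 (M.notMem_anc_pa hv)))
          measurable_const (M.measurable_N_anc (M.pa v))
          fun n => ((M.measurable_thinStep_vertexSigma v n).natCast).pow_const 2]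
        refine lintegral_congr fun ω => ?_
        rw [M.lintegral_thinStep_sq hv, one_mul, ← ENNReal.ofReal_natCast,
          ← ENNReal.ofReal_pow (Nat.cast_nonneg _), ← ENNReal.ofReal_mul (by positivity),
          ← ENNReal.ofReal_mul (by positivity), ← ENNReal.ofReal_add (by positivity)
            (by positivity), ← ENNReal.ofReal_add (by positivity) (by positivity)]
        congr 1
        ring
    _ = _ := by
        rw [lintegral_add_left (by fun_prop), lintegral_add_left (by fun_prop),
          lintegral_const_mul _ (by fun_prop), lintegral_const_mul _ hYm, lintegral_const,
          measure_univ, mul_one]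

theorem lintegral_N_sq (v : V) : ∫⁻ ω, (M.N v ω : ℝ≥0∞) ^ 2 = ENNReal.ofReal (lam ^ 2 + lam) := by
  induction v using M.induction_pa with
  | root =>
    rw [M.N_root]
    exact lintegral_sq_of_poisson (M.meas_L _) M.lam_pos.le M.L_root_poisson
  | pa v hv ih =>
    obtain ⟨hα₀, hα₁⟩ := M.alpha_pa_mem hv
    have := M.lam_pos
    rw [M.lintegral_N_sq_eq hv, ih, M.lintegral_N,
      ← ENNReal.ofReal_mul (by positivity), ← ENNReal.ofReal_mul (by positivity),
      ← ENNReal.ofReal_add (by positivity) (by positivity),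
      ← ENNReal.ofReal_add (by positivity) (by positivity)]
    congr 1
    ring

theorem lintegral_N_mul_N (u v : V) :
    ∫⁻ ω, (M.N u ω : ℝ≥0∞) * M.N v ω =
      ENNReal.ofReal (lam ^ 2 + lam * M.isTree.pathProd alpha u v) := by
  induction h : G.dist M.root u + G.dist M.root v using Nat.strong_induction_on
    generalizing u v with
  | _ n ih =>
  wlog hle : G.dist M.root u ≤ G.dist M.root v generalizing u v
  · rw [IsTree.pathProd_comm, ← this v u (by omega) (by omega)]
    exact lintegral_congr fun ω => mul_comm _ _
  obtain rfl | hne := eq_or_ne u v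
  · simp_rw [IsTree.pathProd_self, mul_one, ← sq]
    exact M.lintegral_N_sq u
  have hv : v ≠ M.root := by
    rintro rfl
    rw [SimpleGraph.dist_self, Nat.le_zero, M.isTree.connected.dist_eq_zero_iff] at hle
    exact hne hle.symm
  have hvu := M.notMem_anc_of_dist_le hne hle
  obtain ⟨hα₀, hα₁⟩ := M.alpha_pa_mem hv
  have := M.lam_pos
  have hπ := (M.isTree.pathProd_mem_Icc M.alpha_mem u (M.pa v)).1
  have hN := ((M.measurable_N_anc u).mono
    (M.vertexSigma_mono (Set.subset_union_left (t := M.anc (M.pa v)))) le_rfl).natCast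
    (α := ℝ≥0∞)
  rw [M.lintegral_mul_N hv (fun h => h.elim hvu (M.notMem_anc_pa hv)) Set.subset_union_right hN,
    ih _ (by have := M.pa_dist v hv; omega) u (M.pa v) rfl, M.lintegral_N,
    M.pathProd_eq_pathProd_pa_mul hv hvu, ← ENNReal.ofReal_mul hα₀,
    ← ENNReal.ofReal_mul (by positivity), ← ENNReal.ofReal_add (by positivity) (by positivity)]
  congr 1
  ring

theorem integral_N (v : V) : ∫ ω, (M.N v ω : ℝ) = lam :=
  integral_natCast_eq_of_lintegral (M.meas_N v) M.lam_pos.le (M.lintegral_N v)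

theorem integral_N_mul_N (u v : V) :
    ∫ ω, (M.N u ω : ℝ) * M.N v ω = lam ^ 2 + lam * M.isTree.pathProd alpha u v := by
  have := M.lam_pos
  have hπ := (M.isTree.pathProd_mem_Icc M.alpha_mem u v).1
  simpa using integral_natCast_eq_of_lintegral ((M.meas_N u).mul (M.meas_N v)) (by positivity)
    (by simpa using M.lintegral_N_mul_N u v)

theorem covariance_N (u v : V) :
    (∫ ω, (M.N u ω : ℝ) * M.N v ω) - (∫ ω, (M.N u ω : ℝ)) * ∫ ω, (M.N v ω : ℝ) =
      lam * M.isTree.pathProd alpha u v := by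
  rw [M.integral_N_mul_N, M.integral_N, M.integral_N]
  ring

end MPMRF

/-- For the weighted adjacency matrix `A` of a tree (`A_{ii} = 1`,
`A_{ij} = α_{(i,j)}` on edges, `0` otherwise), the `d`-th max-product power of `A`
recovers the product of the weights along the unique path between any two vertices;
consequently `Cov(N_u, N_v) = λ (A^d)_{uv}` for an MPMRF on that tree. -/
theorem maxProd_power_path_products {V : Type} [Fintype V] [DecidableEq V] [Nonempty V]
    (G : SimpleGraph V) [DecidableRel G.Adj] (hG : G.IsTree)
    (alpha : Sym2 V → ℝ) (halpha : ∀ e ∈ G.edgeSet, alpha e ∈ Set.Icc (0 : ℝ) 1)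
    (A : V → V → ℝ)
    (hA : ∀ i j : V, A i j
      = if i = j then 1 else if G.Adj i j then alpha s(i, j) else 0)
    (lam : ℝ) (Ω : Type) [MeasureSpace Ω] [IsProbabilityMeasure (ℙ : Measure Ω)]
    (M : MPMRF G lam alpha Ω) :
    ∀ (u v : V) (p : G.Walk u v), p.IsPath →
      (maxPow A (Fintype.card V) u v = (p.edges.map alpha).prod
      ∧ (∫ ω, ((M.N u ω : ℝ) * (M.N v ω : ℝ)) ∂ℙ)
            - (∫ ω, (M.N u ω : ℝ) ∂ℙ) * (∫ ω, (M.N v ω : ℝ) ∂ℙ)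
          = lam * maxPow A (Fintype.card V) u v) := by
  intro u v p hp
  obtain rfl : A = weightedAdj G alpha := funext fun i => funext (hA i)
  have hmax := maxPow_card_eq_prod hG halpha hp
  exact ⟨hmax, by rw [M.covariance_N, hmax, IsTree.pathProd_eq hp]⟩
end
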